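/- In any conditional logic containing classical propositional logic and closed under RCEA (from φ ↔ ψ infer (φ>χ) ↔ (ψ>χ)) in which SDA ((φ∨ψ>χ) → (φ>χ)∧(ψ>χ)) is derivable, strengthening of the antecedent is derivable: ⊢ (φ>χ) → (φ∧ψ > χ). -/
import Mathlib


inductive Form where
  | var : Nat → Form
  | bot : Form
  | neg : Form → Form
  | conj : Form → Form → Form
  | disj : Form → Form → Form
  | imp : Form → Form → Form
  | cond : Form → Form → Form

def Form.iff (p q : Form) : Form := Form.conj (Form.imp p q) (Form.imp q p)

/-- A boolean valuation respecting the classical connectives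
(conditional subformulas are treated as atoms). -/
def ClassVal (v : Form → Bool) : Prop :=
  v Form.bot = false ∧
  (∀ p, v (Form.neg p) = ! v p) ∧
  (∀ p q, v (Form.conj p q) = (v p && v q)) ∧
  (∀ p q, v (Form.disj p q) = (v p || v q)) ∧
  (∀ p q, v (Form.imp p q) = (! v p || v q))

/-- Classical tautologies. -/
def IsTaut (p : Form) : Prop := ∀ v, ClassVal v → v p = true

inductive Der : Form → Prop where
  | taut : ∀ p, IsTaut p → Der p
  | mp : ∀ p q, Der (Form.imp p q) → Der p → Der q
  | sda : ∀ p q r, Der (Form.imp (Form.cond (Form.disj p q) r)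
      (Form.conj (Form.cond p r) (Form.cond q r)))
  | rcea : ∀ p q r, Der (Form.iff p q) → Der (Form.iff (Form.cond p r) (Form.cond q r))


lemma taut_simp {A : Form} (h : ∀ v : Form → Bool,
    v Form.bot = false →
    (∀ p, v (Form.neg p) = ! v p) →
    (∀ p q, v (Form.conj p q) = (v p && v q)) →
    (∀ p q, v (Form.disj p q) = (v p || v q)) →
    (∀ p q, v (Form.imp p q) = (! v p || v q)) → v A = true) : Der A :=
  Der.taut A (fun v ⟨h1, h2, h3, h4, h5⟩ => h v h1 h2 h3 h4 h5)

lemma der_trans {A B C : Form} (h1 : Der (Form.imp A B)) (h2 : Der (Form.imp B C)) :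
    Der (Form.imp A C) := by
  have t : Der (Form.imp (Form.imp A B) (Form.imp (Form.imp B C) (Form.imp A C))) := by
    apply taut_simp
    intro v _ _ _ _ h5
    simp only [h5]
    cases v A <;> cases v B <;> cases v C <;> simp
  exact Der.mp _ _ (Der.mp _ _ t h1) h2

/-- Strengthening of the antecedent is derivable from PC, SDA and RCEA. -/
theorem strengthening_derivable (p q r : Form) :
    Der (Form.imp (Form.cond p r) (Form.cond (Form.conj p q) r)) := by
  -- p ↔ p ∨ (p ∧ q) is a tautology
  have hiff : Der (Form.iff p (Form.disj p (Form.conj p q))) := by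
    apply taut_simp
    intro v _ _ h3 h4 h5
    simp only [Form.iff, h3, h4, h5]
    cases v p <;> cases v q <;> simp
  have hrcea := Der.rcea _ _ r hiff
  -- extract forward direction
  have hfwd : Der (Form.imp (Form.cond p r) (Form.cond (Form.disj p (Form.conj p q)) r)) := by
    have t : Der (Form.imp (Form.iff (Form.cond p r) (Form.cond (Form.disj p (Form.conj p q)) r))
        (Form.imp (Form.cond p r) (Form.cond (Form.disj p (Form.conj p q)) r))) := by
      apply taut_simp
      intro v _ _ h3 _ h5
      simp only [Form.iff, h3, h5]
      cases v (Form.cond p r) <;> cases v (Form.cond (Form.disj p (Form.conj p q)) r) <;> simp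
    exact Der.mp _ _ t hrcea
  have hsda := Der.sda p (Form.conj p q) r
  -- extract second conjunct of sda consequent
  have hsnd : Der (Form.imp (Form.cond (Form.disj p (Form.conj p q)) r)
      (Form.cond (Form.conj p q) r)) := by
    have t : Der (Form.imp
        (Form.imp (Form.cond (Form.disj p (Form.conj p q)) r)
          (Form.conj (Form.cond p r) (Form.cond (Form.conj p q) r)))
        (Form.imp (Form.cond (Form.disj p (Form.conj p q)) r)
          (Form.cond (Form.conj p q) r))) := by
      apply taut_simp
      intro v _ _ h3 _ h5
      simp only [h3, h5]
      cases v (Form.cond (Form.disj p (Form.conj p q)) r) <;>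
        cases v (Form.cond p r) <;> cases v (Form.cond (Form.conj p q) r) <;> simp
    exact Der.mp _ _ t hsda
  exact der_trans hfwd hsnd
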